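/- As f → 0, the average velocity satisfies V(f) = (f/a₀)·(1 + f·(a₁/a₀ − 1/2)) + O(f³); that is, V(f) − (f/a₀) − (f²/a₀)·(a₁/a₀ − 1/2) is O(f³) near f = 0. -/
import Mathlib


open MeasureTheory intervalIntegral Asymptotics Filter

noncomputable def w0 (φ : ℝ → ℝ) (f x : ℝ) : ℝ :=
  ∫ s in (0:ℝ)..1, Real.exp (φ (x + s) - φ x - f * s)

noncomputable def M0 (φ : ℝ → ℝ) (f : ℝ) : ℝ := ∫ x in (0:ℝ)..1, w0 φ f x

noncomputable def w1 (φ : ℝ → ℝ) (f x : ℝ) : ℝ :=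
  ∫ s in (0:ℝ)..1, (w0 φ f (x + s)) ^ 2 * Real.exp (φ (x + s) - φ x - f * s)

noncomputable def M1 (φ : ℝ → ℝ) (f : ℝ) : ℝ := ∫ x in (0:ℝ)..1, w1 φ f x

private noncomputable def Afun (φ : ℝ → ℝ) (x : ℝ) : ℝ :=
  ∫ s in (0:ℝ)..1, Real.exp (φ (x + s) - φ x)

private noncomputable def Bfun (φ : ℝ → ℝ) (x : ℝ) : ℝ :=
  ∫ s in (0:ℝ)..1, Real.exp (φ (x + s) - φ x) * s

private lemma exp_taylor2 {y : ℝ} (hy : |y| ≤ 1) :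
    |Real.exp y - (1 + y)| ≤ 3 / 4 * y ^ 2 := by
  have h := Real.exp_bound hy (n := 2) (by norm_num)
  have hs : ∑ m ∈ Finset.range 2, y ^ m / (Nat.factorial m : ℝ) = 1 + y := by
    simp [Finset.sum_range_succ]
  rw [hs] at h
  calc |Real.exp y - (1 + y)| ≤ |y| ^ 2 * ((Nat.succ 2 : ℝ) / ((Nat.factorial 2 : ℝ) * 2)) := h
    _ = 3 / 4 * y ^ 2 := by rw [sq_abs]; norm_num [Nat.factorial]; ring

private lemma exp_taylor3 {y : ℝ} (hy : |y| ≤ 1) :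
    |Real.exp y - (1 + y + y ^ 2 / 2)| ≤ 2 / 9 * |y| ^ 3 := by
  have h := Real.exp_bound hy (n := 3) (by norm_num)
  have hs : ∑ m ∈ Finset.range 3, y ^ m / (Nat.factorial m : ℝ) = 1 + y + y ^ 2 / 2 := by
    simp [Finset.sum_range_succ]
  rw [hs] at h
  calc |Real.exp y - (1 + y + y ^ 2 / 2)|
      ≤ |y| ^ 3 * ((Nat.succ 3 : ℝ) / ((Nat.factorial 3 : ℝ) * 3)) := h
    _ = 2 / 9 * |y| ^ 3 := by norm_num [Nat.factorial]; ring

set_option maxHeartbeats 1000000 in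
/-- As `f → 0`, the average velocity `V(f) = (1 − e^{−f})/M₀(f)`
satisfies `V(f) = (f/a₀)·(1 + f·(a₁/a₀ − 1/2)) + O(f³)`. -/
theorem stmt_7 (φ : ℝ → ℝ) (hφc : Continuous φ) (hφper : ∀ x, φ (x + 1) = φ x)
    (a0 a1 : ℝ)
    (ha0 : a0 = (∫ x in (0:ℝ)..1, Real.exp (-φ x)) * ∫ s in (0:ℝ)..1, Real.exp (φ s))
    (ha1 : a1 = ∫ x in (0:ℝ)..1, ∫ s in (0:ℝ)..1, Real.exp (φ (x + s) - φ x) * s)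
    (V : ℝ → ℝ) (hV : ∀ f, V f = (1 - Real.exp (-f)) / M0 φ f) :
    (fun f => V f - f / a0 - f ^ 2 / a0 * (a1 / a0 - 1 / 2)) =O[nhds 0]
      (fun f => f ^ 3) := by
  have hper : Function.Periodic φ 1 := hφper
  -- boundedness of φ
  obtain ⟨K, hK⟩ : ∃ K : ℝ, ∀ x, |φ x| ≤ K := by
    obtain ⟨C, hC⟩ := (isCompact_Icc (a := (0:ℝ)) (b := 1)).exists_bound_of_continuousOn
      hφc.continuousOn
    refine ⟨C, fun x => ?_⟩
    obtain ⟨y, hy, hxy⟩ := hper.exists_mem_Ico₀ one_pos x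
    rw [hxy, ← Real.norm_eq_abs]
    exact hC y (Set.mem_Icc_of_Ico hy)
  -- continuity of the various parametric integrals
  have hcw : ∀ g : ℝ, Continuous (w0 φ g) := by
    intro g
    unfold w0
    exact intervalIntegral.continuous_parametric_intervalIntegral_of_continuous'
      (f := fun x s => Real.exp (φ (x + s) - φ x - g * s)) (by fun_prop) 0 1
  have hcA : Continuous (Afun φ) := by
    unfold Afun
    exact intervalIntegral.continuous_parametric_intervalIntegral_of_continuous'
      (f := fun x s => Real.exp (φ (x + s) - φ x)) (by fun_prop) 0 1
  have hcB : Continuous (Bfun φ) := by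
    unfold Bfun
    exact intervalIntegral.continuous_parametric_intervalIntegral_of_continuous'
      (f := fun x s => Real.exp (φ (x + s) - φ x) * s) (by fun_prop) 0 1
  -- a0 = ∫ Afun
  have hAconst : ∀ x, Afun φ x = Real.exp (-φ x) * ∫ s in (0:ℝ)..1, Real.exp (φ s) := by
    intro x
    have h1 : Afun φ x = ∫ s in (0:ℝ)..1, Real.exp (-φ x) * Real.exp (φ (x + s)) := by
      unfold Afun
      apply intervalIntegral.integral_congr
      intro s _
      dsimp only
      rw [← Real.exp_add]
      congr 1
      ring
    rw [h1, intervalIntegral.integral_const_mul]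
    congr 1
    have h2 : (∫ s in (0:ℝ)..1, Real.exp (φ (x + s))) = ∫ u in (x + 0)..(x + 1), Real.exp (φ u) :=
      intervalIntegral.integral_comp_add_left (fun u => Real.exp (φ u)) x
    rw [h2]
    have hpe : Function.Periodic (fun u => Real.exp (φ u)) 1 := fun u => by simp [hper u]
    simpa using hpe.intervalIntegral_add_eq x 0
  have ha0A : (∫ x in (0:ℝ)..1, Afun φ x) = a0 := by
    rw [intervalIntegral.integral_congr (g := fun x =>
          Real.exp (-φ x) * ∫ s in (0:ℝ)..1, Real.exp (φ s)) (fun x _ => hAconst x),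
        intervalIntegral.integral_mul_const, ha0]
  have ha1B : (∫ x in (0:ℝ)..1, Bfun φ x) = a1 := by rw [ha1]; rfl
  -- pointwise second-order estimate
  have hpt : ∀ g : ℝ, |g| ≤ 1 → ∀ x,
      |w0 φ g x - Afun φ x + g * Bfun φ x| ≤ 3 / 4 * Real.exp (2 * K) * g ^ 2 := by
    intro g hg x
    have hi1 : IntervalIntegrable (fun s => Real.exp (φ (x + s) - φ x - g * s)) volume 0 1 :=
      (by fun_prop : Continuous fun s => Real.exp (φ (x + s) - φ x - g * s)).intervalIntegrable 0 1
    have hi2 : IntervalIntegrable (fun s => Real.exp (φ (x + s) - φ x)) volume 0 1 :=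
      (by fun_prop : Continuous fun s => Real.exp (φ (x + s) - φ x)).intervalIntegrable 0 1
    have hi3 : IntervalIntegrable (fun s => Real.exp (φ (x + s) - φ x) * s) volume 0 1 :=
      (by fun_prop : Continuous fun s => Real.exp (φ (x + s) - φ x) * s).intervalIntegrable 0 1
    have hrw : w0 φ g x - Afun φ x + g * Bfun φ x
        = ∫ s in (0:ℝ)..1, (Real.exp (φ (x + s) - φ x - g * s) - Real.exp (φ (x + s) - φ x)
            + g * (Real.exp (φ (x + s) - φ x) * s)) := by
      rw [intervalIntegral.integral_add (hi1.sub hi2) (hi3.const_mul g),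
          intervalIntegral.integral_sub hi1 hi2, intervalIntegral.integral_const_mul]
      rfl
    rw [hrw]
    have hb : ∀ s ∈ Set.uIoc (0:ℝ) 1,
        ‖Real.exp (φ (x + s) - φ x - g * s) - Real.exp (φ (x + s) - φ x)
            + g * (Real.exp (φ (x + s) - φ x) * s)‖ ≤ 3 / 4 * Real.exp (2 * K) * g ^ 2 := by
      intro s hs
      rw [Set.uIoc_of_le (by norm_num : (0:ℝ) ≤ 1)] at hs
      obtain ⟨hs0, hs1⟩ := hs
      have h1 : Real.exp (φ (x + s) - φ x - g * s) - Real.exp (φ (x + s) - φ x)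
          + g * (Real.exp (φ (x + s) - φ x) * s)
          = Real.exp (φ (x + s) - φ x) * (Real.exp (-(g * s)) - (1 + -(g * s))) := by
        rw [sub_eq_add_neg (φ (x + s) - φ x) (g * s), Real.exp_add]
        ring
      have hy : |(-(g * s))| ≤ 1 := by
        rw [abs_neg, abs_mul]
        calc |g| * |s| ≤ 1 * 1 := by
              apply mul_le_mul hg _ (abs_nonneg s) zero_le_one
              rw [abs_of_nonneg hs0.le]; exact hs1
          _ = 1 := by norm_num
      have hD2 : Real.exp (φ (x + s) - φ x) ≤ Real.exp (2 * K) := by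
        apply Real.exp_le_exp.2
        have h1 := abs_le.1 (hK (x + s))
        have h2 := abs_le.1 (hK x)
        linarith [h1.2, h2.1]
      have hs2 : s ^ 2 ≤ 1 := by nlinarith
      calc ‖Real.exp (φ (x + s) - φ x - g * s) - Real.exp (φ (x + s) - φ x)
              + g * (Real.exp (φ (x + s) - φ x) * s)‖
          = Real.exp (φ (x + s) - φ x) * |Real.exp (-(g * s)) - (1 + -(g * s))| := by
            rw [Real.norm_eq_abs, h1, abs_mul, abs_of_pos (Real.exp_pos _)]
        _ ≤ Real.exp (2 * K) * (3 / 4 * (-(g * s)) ^ 2) :=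
            mul_le_mul hD2 (exp_taylor2 hy) (abs_nonneg _) (Real.exp_pos _).le
        _ = 3 / 4 * Real.exp (2 * K) * (g ^ 2 * s ^ 2) := by ring
        _ ≤ 3 / 4 * Real.exp (2 * K) * g ^ 2 := by
            nlinarith [Real.exp_pos (2 * K), sq_nonneg g, sq_nonneg s,
              mul_nonneg (sq_nonneg g) (sub_nonneg.2 hs2)]
    calc |∫ s in (0:ℝ)..1, (Real.exp (φ (x + s) - φ x - g * s) - Real.exp (φ (x + s) - φ x)
            + g * (Real.exp (φ (x + s) - φ x) * s))|
        = ‖∫ s in (0:ℝ)..1, (Real.exp (φ (x + s) - φ x - g * s) - Real.exp (φ (x + s) - φ x)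
            + g * (Real.exp (φ (x + s) - φ x) * s))‖ := (Real.norm_eq_abs _).symm
      _ ≤ 3 / 4 * Real.exp (2 * K) * g ^ 2 * |1 - 0| :=
          intervalIntegral.norm_integral_le_of_norm_le_const hb
      _ = 3 / 4 * Real.exp (2 * K) * g ^ 2 := by norm_num
  -- integrated second-order estimate
  have hM0est : ∀ g : ℝ, |g| ≤ 1 →
      |M0 φ g - a0 + a1 * g| ≤ 3 / 4 * Real.exp (2 * K) * g ^ 2 := by
    intro g hg
    have hiw : IntervalIntegrable (w0 φ g) volume 0 1 := (hcw g).intervalIntegrable 0 1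
    have hiA : IntervalIntegrable (Afun φ) volume 0 1 := hcA.intervalIntegrable 0 1
    have hiB : IntervalIntegrable (Bfun φ) volume 0 1 := hcB.intervalIntegrable 0 1
    have hsplit : M0 φ g - a0 + a1 * g
        = ∫ x in (0:ℝ)..1, (w0 φ g x - Afun φ x + g * Bfun φ x) := by
      rw [intervalIntegral.integral_add (hiw.sub hiA) (hiB.const_mul g),
          intervalIntegral.integral_sub hiw hiA, intervalIntegral.integral_const_mul,
          ha0A, ha1B]
      unfold M0
      ring
    rw [hsplit]
    have hb2 : ∀ x ∈ Set.uIoc (0:ℝ) 1,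
        ‖w0 φ g x - Afun φ x + g * Bfun φ x‖ ≤ 3 / 4 * Real.exp (2 * K) * g ^ 2 := by
      intro x _
      rw [Real.norm_eq_abs]
      exact hpt g hg x
    calc |∫ x in (0:ℝ)..1, (w0 φ g x - Afun φ x + g * Bfun φ x)|
        = ‖∫ x in (0:ℝ)..1, (w0 φ g x - Afun φ x + g * Bfun φ x)‖ := (Real.norm_eq_abs _).symm
      _ ≤ 3 / 4 * Real.exp (2 * K) * g ^ 2 * |1 - 0| :=
          intervalIntegral.norm_integral_le_of_norm_le_const hb2
      _ = 3 / 4 * Real.exp (2 * K) * g ^ 2 := by norm_num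
  -- lower bound for M0
  have hlow : ∀ g : ℝ, |g| ≤ 1 → Real.exp (-(2 * K + 1)) ≤ M0 φ g := by
    intro g hg
    have hw : ∀ x, Real.exp (-(2 * K + 1)) ≤ w0 φ g x := by
      intro x
      have hconst : Real.exp (-(2 * K + 1))
          = ∫ _ in (0:ℝ)..1, Real.exp (-(2 * K + 1)) := by simp
      rw [hconst]
      apply intervalIntegral.integral_mono_on (by norm_num) intervalIntegrable_const
        ((by fun_prop :
          Continuous fun s => Real.exp (φ (x + s) - φ x - g * s)).intervalIntegrable 0 1)
      intro s hs
      apply Real.exp_le_exp.2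
      have h1 := abs_le.1 (hK (x + s))
      have h2 := abs_le.1 (hK x)
      have h3 : |g * s| ≤ 1 := by
        rw [abs_mul]
        calc |g| * |s| ≤ 1 * 1 := by
              apply mul_le_mul hg _ (abs_nonneg s) zero_le_one
              rw [abs_of_nonneg hs.1]; exact hs.2
          _ = 1 := by norm_num
      have h4 := abs_le.1 h3
      linarith [h1.1, h2.2]
    have hiw : IntervalIntegrable (w0 φ g) volume 0 1 := (hcw g).intervalIntegrable 0 1
    have : (∫ _ in (0:ℝ)..1, Real.exp (-(2 * K + 1))) ≤ ∫ x in (0:ℝ)..1, w0 φ g x :=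
      intervalIntegral.integral_mono_on (by norm_num) intervalIntegrable_const hiw
        (fun x _ => hw x)
    simpa [M0] using this
  -- positivity of a0
  have ha0pos : 0 < a0 := by
    have h0 : M0 φ 0 = ∫ x in (0:ℝ)..1, Afun φ x := by
      unfold M0 w0 Afun
      apply intervalIntegral.integral_congr
      intro x _
      apply intervalIntegral.integral_congr
      intro s _
      norm_num
    have h := hlow 0 (by norm_num)
    rw [h0, ha0A] at h
    exact lt_of_lt_of_le (Real.exp_pos _) h
  have ha0ne : a0 ≠ 0 := ha0pos.ne'
  -- final assembly
  rw [Asymptotics.isBigO_iff]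
  refine ⟨(a0 ^ 2 * (2 / 9) + |(a1 - a0 / 2) * a1|
      + (|a0| + |a1 - a0 / 2|) * (3 / 4 * Real.exp (2 * K)))
      / (a0 ^ 2 * Real.exp (-(2 * K + 1))), ?_⟩
  have hball : ∀ᶠ g : ℝ in nhds 0, |g| ≤ 1 := by
    filter_upwards [Icc_mem_nhds (by norm_num : (-1:ℝ) < 0) (by norm_num : (0:ℝ) < 1)] with g hg
    exact abs_le.2 ⟨hg.1, hg.2⟩
  filter_upwards [hball] with g hg
  have hMpos : 0 < M0 φ g := lt_of_lt_of_le (Real.exp_pos _) (hlow g hg)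
  have hMne : M0 φ g ≠ 0 := hMpos.ne'
  have key : V g - g / a0 - g ^ 2 / a0 * (a1 / a0 - 1 / 2)
      = (a0 ^ 2 * (1 - Real.exp (-g)) - (a0 * g + (a1 - a0 / 2) * g ^ 2) * M0 φ g)
        / (a0 ^ 2 * M0 φ g) := by
    rw [hV]
    field_simp
    ring
  have hMrw : M0 φ g = a0 - a1 * g + (M0 φ g - a0 + a1 * g) := by ring
  have hEbound : |M0 φ g - a0 + a1 * g| ≤ 3 / 4 * Real.exp (2 * K) * g ^ 2 := hM0est g hg
  have hnum : a0 ^ 2 * (1 - Real.exp (-g)) - (a0 * g + (a1 - a0 / 2) * g ^ 2) * M0 φ g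
      = -(a0 ^ 2 * (Real.exp (-g) - (1 + -g + (-g) ^ 2 / 2))) + (a1 - a0 / 2) * a1 * g ^ 3
        - (a0 * g + (a1 - a0 / 2) * g ^ 2) * (M0 φ g - a0 + a1 * g) := by
    ring
  have h3 : |Real.exp (-g) - (1 + -g + (-g) ^ 2 / 2)| ≤ 2 / 9 * |g| ^ 3 := by
    have := exp_taylor3 (y := -g) (by rwa [abs_neg])
    rwa [abs_neg g] at this
  have hNbound : |(-(a0 ^ 2 * (Real.exp (-g) - (1 + -g + (-g) ^ 2 / 2)))
        + (a1 - a0 / 2) * a1 * g ^ 3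
        - (a0 * g + (a1 - a0 / 2) * g ^ 2) * (M0 φ g - a0 + a1 * g))|
      ≤ (a0 ^ 2 * (2 / 9) + |(a1 - a0 / 2) * a1|
          + (|a0| + |a1 - a0 / 2|) * (3 / 4 * Real.exp (2 * K))) * |g| ^ 3 := by
    have t1 : |(-(a0 ^ 2 * (Real.exp (-g) - (1 + -g + (-g) ^ 2 / 2))))|
        ≤ a0 ^ 2 * (2 / 9 * |g| ^ 3) := by
      rw [abs_neg, abs_mul, abs_of_nonneg (sq_nonneg a0)]
      exact mul_le_mul_of_nonneg_left h3 (sq_nonneg a0)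
    have t2 : |(a1 - a0 / 2) * a1 * g ^ 3| = |(a1 - a0 / 2) * a1| * |g| ^ 3 := by
      rw [abs_mul, abs_pow]
    have t3 : |(a0 * g + (a1 - a0 / 2) * g ^ 2) * (M0 φ g - a0 + a1 * g)|
        ≤ (|a0| + |a1 - a0 / 2|) * (3 / 4 * Real.exp (2 * K)) * |g| ^ 3 := by
      rw [abs_mul]
      have h4 : |a0 * g + (a1 - a0 / 2) * g ^ 2| ≤ (|a0| + |a1 - a0 / 2|) * |g| := by
        calc |a0 * g + (a1 - a0 / 2) * g ^ 2| ≤ |a0 * g| + |(a1 - a0 / 2) * g ^ 2| :=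
              abs_add_le _ _
          _ = |a0| * |g| + |a1 - a0 / 2| * |g| ^ 2 := by rw [abs_mul, abs_mul, abs_pow]
          _ ≤ |a0| * |g| + |a1 - a0 / 2| * |g| := by
              have : |g| ^ 2 ≤ |g| := by nlinarith [abs_nonneg g]
              nlinarith [abs_nonneg (a1 - a0 / 2)]
          _ = (|a0| + |a1 - a0 / 2|) * |g| := by ring
      calc |a0 * g + (a1 - a0 / 2) * g ^ 2| * |M0 φ g - a0 + a1 * g|
          ≤ ((|a0| + |a1 - a0 / 2|) * |g|) * (3 / 4 * Real.exp (2 * K) * g ^ 2) :=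
            mul_le_mul h4 hEbound (abs_nonneg _) (by positivity)
        _ = (|a0| + |a1 - a0 / 2|) * (3 / 4 * Real.exp (2 * K)) * (|g| * g ^ 2) := by ring
        _ = (|a0| + |a1 - a0 / 2|) * (3 / 4 * Real.exp (2 * K)) * |g| ^ 3 := by
            rw [← sq_abs g]; ring
    calc |(-(a0 ^ 2 * (Real.exp (-g) - (1 + -g + (-g) ^ 2 / 2)))
          + (a1 - a0 / 2) * a1 * g ^ 3
          - (a0 * g + (a1 - a0 / 2) * g ^ 2) * (M0 φ g - a0 + a1 * g))|
        ≤ |(-(a0 ^ 2 * (Real.exp (-g) - (1 + -g + (-g) ^ 2 / 2)))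
            + (a1 - a0 / 2) * a1 * g ^ 3)|
          + |(a0 * g + (a1 - a0 / 2) * g ^ 2) * (M0 φ g - a0 + a1 * g)| := abs_sub _ _
      _ ≤ |(-(a0 ^ 2 * (Real.exp (-g) - (1 + -g + (-g) ^ 2 / 2))))|
          + |(a1 - a0 / 2) * a1 * g ^ 3|
          + |(a0 * g + (a1 - a0 / 2) * g ^ 2) * (M0 φ g - a0 + a1 * g)| := by
            linarith [abs_add_le (-(a0 ^ 2 * (Real.exp (-g) - (1 + -g + (-g) ^ 2 / 2))))
              ((a1 - a0 / 2) * a1 * g ^ 3)]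
      _ ≤ a0 ^ 2 * (2 / 9 * |g| ^ 3) + |(a1 - a0 / 2) * a1| * |g| ^ 3
          + (|a0| + |a1 - a0 / 2|) * (3 / 4 * Real.exp (2 * K)) * |g| ^ 3 := by
            rw [← t2]; linarith [t1, t3]
      _ = (a0 ^ 2 * (2 / 9) + |(a1 - a0 / 2) * a1|
          + (|a0| + |a1 - a0 / 2|) * (3 / 4 * Real.exp (2 * K))) * |g| ^ 3 := by ring
  rw [Real.norm_eq_abs, Real.norm_eq_abs, key, hnum, abs_div, abs_pow,
    abs_of_pos (mul_pos (pow_pos ha0pos 2) hMpos)]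
  have hden : (0:ℝ) < a0 ^ 2 * Real.exp (-(2 * K + 1)) := by positivity
  have hmle : a0 ^ 2 * Real.exp (-(2 * K + 1)) ≤ a0 ^ 2 * M0 φ g :=
    mul_le_mul_of_nonneg_left (hlow g hg) (sq_nonneg a0)
  calc |(-(a0 ^ 2 * (Real.exp (-g) - (1 + -g + (-g) ^ 2 / 2)))
          + (a1 - a0 / 2) * a1 * g ^ 3
          - (a0 * g + (a1 - a0 / 2) * g ^ 2) * (M0 φ g - a0 + a1 * g))|
        / (a0 ^ 2 * M0 φ g)
      ≤ |(-(a0 ^ 2 * (Real.exp (-g) - (1 + -g + (-g) ^ 2 / 2)))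
          + (a1 - a0 / 2) * a1 * g ^ 3
          - (a0 * g + (a1 - a0 / 2) * g ^ 2) * (M0 φ g - a0 + a1 * g))|
        / (a0 ^ 2 * Real.exp (-(2 * K + 1))) := by
        apply div_le_div_of_nonneg_left (abs_nonneg _) hden hmle
    _ ≤ ((a0 ^ 2 * (2 / 9) + |(a1 - a0 / 2) * a1|
          + (|a0| + |a1 - a0 / 2|) * (3 / 4 * Real.exp (2 * K))) * |g| ^ 3)
        / (a0 ^ 2 * Real.exp (-(2 * K + 1))) := by
        exact (div_le_div_iff_of_pos_right hden).2 hNbound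
    _ = (a0 ^ 2 * (2 / 9) + |(a1 - a0 / 2) * a1|
          + (|a0| + |a1 - a0 / 2|) * (3 / 4 * Real.exp (2 * K)))
        / (a0 ^ 2 * Real.exp (-(2 * K + 1))) * |g| ^ 3 := by ring
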